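/- arXiv:1901.06710 — 2 statements merged into one kernel-verified Lean document; each statement's English description precedes it below -/
import Mathlib

section
/- Let λ₁(g) denote the length of the shortest nonzero vector of the unimodular lattice |det g|^{-1/n} ℤⁿ g, for g ∈ GL_n(ℝ). Then λ₁(ᵗg^{-1})^{n-1} ≤ (2^{n-1}/V_{n-1}) λ₁(g), where V_{n-1} is the volume of the (n-1)-dimensional Euclidean unit ball. -/
/-! Let `p = v g` be a shortest nonzero vector of `ℤⁿ g`. Every vector `x` of the dual lattice
`ℤⁿ ᵗg⁻¹` satisfies `⟪p, x⟫ ∈ ℤ`, so those in the open slab `|⟪p, x⟫| < 1` are orthogonal to `p`.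
Minkowski's theorem, applied to the cylinder cut out of this slab by an `(n-1)`-ball of radius `r`
(volume `2 r^{n-1} V_{n-1} / ‖p‖`) and the dual lattice (covolume `|det g|⁻¹`), yields a nonzero dual
vector of norm `< r` as soon as `2^{n-1} ‖p‖ |det g|⁻¹ < r^{n-1} V_{n-1}`. Normalizing both
lattices to covolume one gives the inequality. -/

open MeasureTheory Module Submodule Matrix
open scoped RealInnerProductSpace

namespace OrthonormalBasis

variable {E : Type*} [NormedAddCommGroup E] [InnerProductSpace ℝ E] {m : ℕ}
  (o : OrthonormalBasis (Fin (m + 1)) ℝ E)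

noncomputable def headTail : E →ₗ[ℝ] ℝ × EuclideanSpace ℝ (Fin m) where
  toFun x := (o.repr x 0, WithLp.toLp 2 fun j => o.repr x j.succ)
  map_add' x y := by ext <;> simp
  map_smul' c x := by ext <;> simp

theorem headTail_fst (x : E) : (o.headTail x).1 = ⟪o 0, x⟫ :=
  o.repr_apply_apply x 0

theorem norm_sq_eq_headTail (x : E) :
    ‖x‖ ^ 2 = (o.headTail x).1 ^ 2 + ‖(o.headTail x).2‖ ^ 2 := by
  rw [← o.repr.norm_map, EuclideanSpace.real_norm_sq_eq, EuclideanSpace.real_norm_sq_eq,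
    Fin.sum_univ_succ]
  rfl

theorem measurePreserving_headTail [MeasurableSpace E] [BorelSpace E] [FiniteDimensional ℝ E] :
    MeasurePreserving o.headTail := by
  have h : ⇑o.headTail = Prod.map id (WithLp.toLp 2) ∘
      MeasurableEquiv.piFinSuccAbove (fun _ => ℝ) 0 ∘ WithLp.ofLp ∘ o.repr := by
    ext x <;> simp [headTail, MeasurableEquiv.piFinSuccAbove, Fin.tail]
  rw [h, Measure.volume_eq_prod]
  exact ((MeasurePreserving.id _).prod (PiLp.volume_preserving_toLp _)).comp
    ((volume_preserving_piFinSuccAbove _ 0).comp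
      ((PiLp.volume_preserving_ofLp _).comp o.measurePreserving_repr))

def cylinder (c r : ℝ) : Set E :=
  o.headTail ⁻¹' (Set.Ioo (-c) c ×ˢ Metric.ball 0 r)

theorem mem_cylinder {c r : ℝ} {x : E} :
    x ∈ o.cylinder c r ↔ |⟪o 0, x⟫| < c ∧ ‖(o.headTail x).2‖ < r := by
  rw [cylinder, Set.mem_preimage, Set.mem_prod, Set.mem_Ioo, ← abs_lt, headTail_fst,
    mem_ball_zero_iff]

theorem convex_cylinder (c r : ℝ) : Convex ℝ (o.cylinder c r) :=
  ((convex_Ioo _ _).prod (convex_ball _ _)).linear_preimage o.headTail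

theorem neg_mem_cylinder {c r : ℝ} {x : E} (hx : x ∈ o.cylinder c r) : -x ∈ o.cylinder c r := by
  rw [mem_cylinder] at hx ⊢
  rwa [inner_neg_right, abs_neg, map_neg, Prod.snd_neg, norm_neg]

theorem volume_cylinder [MeasurableSpace E] [BorelSpace E] [FiniteDimensional ℝ E]
    (c : ℝ) {r : ℝ} (hr : 0 < r) :
    volume (o.cylinder c r) = ENNReal.ofReal (2 * c) * ENNReal.ofReal (r ^ m) *
      volume (Metric.ball (0 : EuclideanSpace ℝ (Fin m)) 1) := by
  rw [cylinder, o.measurePreserving_headTail.measure_preimage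
      (measurableSet_Ioo.prod Metric.isOpen_ball.measurableSet).nullMeasurableSet,
    Measure.volume_eq_prod, Measure.prod_prod, Real.volume_Ioo,
    Measure.addHaar_ball_of_pos _ _ hr, finrank_euclideanSpace_fin, mul_assoc]
  ring_nf

theorem exists_apply_zero_eq {u : E} (hu : ‖u‖ = 1) (hE : finrank ℝ E = m + 1) :
    ∃ o : OrthonormalBasis (Fin (m + 1)) ℝ E, o 0 = u := by
  have : FiniteDimensional ℝ E := Module.finite_of_finrank_eq_succ hE
  have horth : Orthonormal ℝ (({0} : Set (Fin (m + 1))).domRestrict fun _ => u) :=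
    ⟨fun _ => hu, fun i j hij => (hij (Subsingleton.elim i j)).elim⟩
  obtain ⟨o, ho⟩ := horth.exists_orthonormalBasis_extension_of_card_eq (by simpa using hE)
  exact ⟨o, ho 0 rfl⟩

end OrthonormalBasis

namespace ZLattice

variable {E : Type*} [NormedAddCommGroup E] [InnerProductSpace ℝ E] [FiniteDimensional ℝ E]
  [MeasurableSpace E] [BorelSpace E]

theorem exists_ne_zero_mem_cylinder (L : Submodule ℤ E) [DiscreteTopology L] [IsZLattice ℝ L]
    {m : ℕ} (o : OrthonormalBasis (Fin (m + 1)) ℝ E) {c r : ℝ} (hc : 0 < c) (hr : 0 < r)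
    (hvol : 2 ^ m * covolume L <
      c * r ^ m * (volume (Metric.ball (0 : EuclideanSpace ℝ (Fin m)) 1)).toReal) :
    ∃ x ∈ L, x ≠ 0 ∧ x ∈ o.cylinder c r := by
  have : Countable L.toAddSubgroup := inferInstanceAs (Countable L)
  have fund := isAddFundamentalDomain (Free.chooseBasis ℤ L) volume
  have hball : volume (Metric.ball (0 : EuclideanSpace ℝ (Fin m)) 1) ≠ ⊤ :=
    measure_ball_lt_top.ne
  have hV : 0 < (volume (Metric.ball (0 : EuclideanSpace ℝ (Fin m)) 1)).toReal :=
    ENNReal.toReal_pos (Metric.measure_ball_pos volume _ one_pos).ne' hball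
  have hF : volume (ZSpan.fundamentalDomain ((Free.chooseBasis ℤ L).ofZLatticeBasis ℝ)) =
      ENNReal.ofReal (covolume L) := by
    rw [covolume_eq_measure_fundamentalDomain L volume fund, measureReal_def,
      ENNReal.ofReal_toReal (ZSpan.fundamentalDomain_isBounded _).measure_lt_top.ne]
  have hS_vol : volume (ZSpan.fundamentalDomain ((Free.chooseBasis ℤ L).ofZLatticeBasis ℝ))
      * 2 ^ finrank ℝ E < volume (o.cylinder c r) := by
    rw [o.volume_cylinder _ hr, finrank_eq_card_basis o.toBasis, Fintype.card_fin, hF,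
      ← ENNReal.ofReal_toReal hball,
      show (2 : ENNReal) ^ (m + 1) = ENNReal.ofReal (2 ^ (m + 1)) by simp,
      ← ENNReal.ofReal_mul (covolume_pos L volume).le,
      ← ENNReal.ofReal_mul (by positivity), ← ENNReal.ofReal_mul (by positivity),
      ENNReal.ofReal_lt_ofReal_iff (by positivity), pow_succ]
    linarith
  obtain ⟨⟨x, hxL⟩, hx0, hxS⟩ :=
    exists_ne_zero_mem_lattice_of_measure_mul_two_pow_lt_measure (L := L.toAddSubgroup) fund
      (fun _ => o.neg_mem_cylinder) (o.convex_cylinder c r) hS_vol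
  exact ⟨x, hxL, fun h => hx0 (Subtype.ext h), hxS⟩

theorem exists_ne_zero_mem_norm_lt_of_inner_mem_int (L : Submodule ℤ E) [DiscreteTopology L]
    [IsZLattice ℝ L] {m : ℕ} (hE : finrank ℝ E = m + 1) {p : E} (hp : p ≠ 0)
    (hpL : ∀ x ∈ L, ∃ k : ℤ, ⟪p, x⟫ = k) {r : ℝ} (hr : 0 < r)
    (hvol : 2 ^ m * ‖p‖ * covolume L <
      r ^ m * (volume (Metric.ball (0 : EuclideanSpace ℝ (Fin m)) 1)).toReal) :
    ∃ x ∈ L, x ≠ 0 ∧ ‖x‖ < r := by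
  have hp' : 0 < ‖p‖ := norm_pos_iff.mpr hp
  obtain ⟨o, ho⟩ := OrthonormalBasis.exists_apply_zero_eq (u := ‖p‖⁻¹ • p)
    (by rw [norm_smul, norm_inv, norm_norm, inv_mul_cancel₀ hp'.ne']) hE
  obtain ⟨x, hxL, hx0, hxS⟩ := exists_ne_zero_mem_cylinder L o (inv_pos.mpr hp') hr
    (by rw [← mul_lt_mul_iff_of_pos_left hp']; field_simp; linarith)
  refine ⟨x, hxL, hx0, ?_⟩
  rw [o.mem_cylinder, ho] at hxS
  obtain ⟨h_slab, h_ball⟩ := hxS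
  obtain ⟨k, hk⟩ := hpL x hxL
  have h_orth : ⟪‖p‖⁻¹ • p, x⟫ = 0 := by
    rw [real_inner_smul_left, hk] at h_slab ⊢
    rw [abs_mul, abs_inv, abs_norm, inv_mul_lt_iff₀ hp', mul_inv_cancel₀ hp'.ne', ← Int.cast_abs,
      ← Int.cast_one, Int.cast_lt, Int.abs_lt_one_iff] at h_slab
    simp [h_slab]
  refine lt_of_pow_lt_pow_left₀ 2 hr.le ?_
  rw [o.norm_sq_eq_headTail, o.headTail_fst, ho, h_orth]
  nlinarith [norm_nonneg (o.headTail x).2]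

theorem covolume_span_eq_abs_det {ι : Type*} [Fintype ι] [DecidableEq ι]
    (o : OrthonormalBasis ι ℝ E) (b : Basis ι ℝ E) :
    covolume (span ℤ (Set.range b)) = |o.toBasis.det b| := by
  rw [covolume_eq_measure_fundamentalDomain _ volume (ZSpan.isAddFundamentalDomain b _),
    ZSpan.measureReal_fundamentalDomain b volume o.toBasis,
    measureReal_congr (ZSpan.fundamentalDomain_ae_parallelepiped _ volume), o.coe_toBasis,
    measureReal_def, o.volume_parallelepiped, ENNReal.toReal_one, mul_one]

end ZLattice

theorem EuclideanSpace.norm_toLp_eq_sqrt_sum_sq {ι : Type*} [Fintype ι] (y : ι → ℝ) :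
    ‖WithLp.toLp 2 y‖ = √(∑ i, y i ^ 2) := by
  simp [EuclideanSpace.norm_eq, sq_abs]

namespace Matrix

variable {ι : Type*} [Fintype ι] [DecidableEq ι]

noncomputable def rowBasis (M : Matrix ι ι ℝ) (hM : IsUnit M.det) :
    Basis ι ℝ (EuclideanSpace ℝ ι) :=
  basisOfLinearIndependentOfCardEqFinrank' (fun i => WithLp.toLp 2 (M i))
    ((linearIndependent_rows_iff_isUnit.mpr ((isUnit_iff_isUnit_det M).mpr hM)).map'
      (WithLp.linearEquiv 2 ℝ (ι → ℝ)).symm.toLinearMap (LinearEquiv.ker _))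
    (by simp)

theorem rowBasis_apply (M : Matrix ι ι ℝ) (hM : IsUnit M.det) (i : ι) :
    M.rowBasis hM i = WithLp.toLp 2 (M i) :=
  congrFun (coe_basisOfLinearIndependentOfCardEqFinrank' _ _ _) i

theorem mem_span_rowBasis_iff (M : Matrix ι ι ℝ) (hM : IsUnit M.det) (x : EuclideanSpace ℝ ι) :
    x ∈ span ℤ (Set.range (M.rowBasis hM)) ↔
      ∃ w : ι → ℤ, WithLp.toLp 2 (vecMul (fun j => (w j : ℝ)) M) = x := by
  simp_rw [mem_span_range_iff_exists_fun, rowBasis_apply, vecMul_eq_sum]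
  simp [← WithLp.toLp_sum, Int.cast_smul_eq_zsmul]

theorem covolume_span_rowBasis (M : Matrix ι ι ℝ) (hM : IsUnit M.det) :
    ZLattice.covolume (span ℤ (Set.range (M.rowBasis hM))) = |M.det| := by
  rw [ZLattice.covolume_span_eq_abs_det (EuclideanSpace.basisFun ι ℝ), Basis.det_apply,
    ← det_transpose]
  congr
  ext i j
  simp [Basis.toMatrix_apply, rowBasis_apply]

theorem vecMul_dotProduct_vecMul_inv_transpose (g : Matrix ι ι ℝ) (hg : IsUnit g.det)
    (a b : ι → ℝ) : vecMul a g ⬝ᵥ vecMul b g⁻¹ᵀ = a ⬝ᵥ b := by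
  rw [vecMul_transpose, dotProduct_mulVec, vecMul_vecMul, mul_nonsing_inv g hg, vecMul_one]

theorem exists_ne_zero_norm_vecMul_inv_transpose_lt {m : ℕ} (hι : Fintype.card ι = m + 1)
    (g : Matrix ι ι ℝ) (hg : IsUnit g.det) {v : ι → ℤ} (hv : v ≠ 0) {r : ℝ} (hr : 0 < r)
    (hvol : 2 ^ m * ‖WithLp.toLp 2 (vecMul (fun j => (v j : ℝ)) g)‖ * |g.det|⁻¹ <
      r ^ m * (volume (Metric.ball (0 : EuclideanSpace ℝ (Fin m)) 1)).toReal) :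
    ∃ w : ι → ℤ, w ≠ 0 ∧ ‖WithLp.toLp 2 (vecMul (fun j => (w j : ℝ)) g⁻¹ᵀ)‖ < r := by
  have hA : IsUnit g⁻¹ᵀ.det := by
    rw [det_transpose]
    exact isUnit_nonsing_inv_det g hg
  have hp : WithLp.toLp 2 (vecMul (fun j => (v j : ℝ)) g) ≠ 0 := by
    rw [Ne, WithLp.toLp_eq_zero]
    refine fun h => hg.ne_zero (exists_vecMul_eq_zero_iff.mp ⟨_, fun h0 => hv ?_, h⟩)
    exact funext fun j => by simpa using congrFun h0 j
  have hpL : ∀ x ∈ span ℤ (Set.range (g⁻¹ᵀ.rowBasis hA)),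
      ∃ k : ℤ, ⟪WithLp.toLp 2 (vecMul (fun j => (v j : ℝ)) g), x⟫ = k := by
    intro x hx
    obtain ⟨w, rfl⟩ := (mem_span_rowBasis_iff _ hA x).mp hx
    refine ⟨v ⬝ᵥ w, ?_⟩
    rw [EuclideanSpace.inner_toLp_toLp, star_trivial, dotProduct_comm,
      vecMul_dotProduct_vecMul_inv_transpose g hg]
    simp [dotProduct]
  have hcov : ZLattice.covolume (span ℤ (Set.range (g⁻¹ᵀ.rowBasis hA))) = |g.det|⁻¹ := by
    rw [covolume_span_rowBasis, det_transpose, det_nonsing_inv, Ring.inverse_eq_inv', abs_inv]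
  obtain ⟨x, hxL, hx0, hxr⟩ := ZLattice.exists_ne_zero_mem_norm_lt_of_inner_mem_int _
    (by simpa using hι) hp hpL hr (by rwa [hcov])
  obtain ⟨w, rfl⟩ := (mem_span_rowBasis_iff _ hA x).mp hxL
  refine ⟨w, fun hw => hx0 ?_, hxr⟩
  subst hw
  ext j
  simp [vecMul, dotProduct]

noncomputable def unimodularNorm {n : ℕ} (M : Matrix (Fin n) (Fin n) ℝ) (v : Fin n → ℤ) : ℝ :=
  |M.det| ^ (-(1 : ℝ) / n) * ‖WithLp.toLp 2 (vecMul (fun j => (v j : ℝ)) M)‖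

theorem unimodularNorm_nonneg {n : ℕ} (M : Matrix (Fin n) (Fin n) ℝ) (v : Fin n → ℤ) :
    0 ≤ M.unimodularNorm v := by
  unfold unimodularNorm
  positivity

theorem exists_unimodularNorm_inv_transpose_lt {m : ℕ} (g : Matrix (Fin (m + 1)) (Fin (m + 1)) ℝ)
    (hg : IsUnit g.det) {v : Fin (m + 1) → ℤ} (hv : v ≠ 0) {s : ℝ} (hs : 0 < s)
    (h : 2 ^ m / (volume (Metric.ball (0 : EuclideanSpace ℝ (Fin m)) 1)).toReal *
      g.unimodularNorm v < s ^ m) :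
    ∃ w : Fin (m + 1) → ℤ, w ≠ 0 ∧ g⁻¹ᵀ.unimodularNorm w < s := by
  set V := (volume (Metric.ball (0 : EuclideanSpace ℝ (Fin m)) 1)).toReal
  have hV : 0 < V := ENNReal.toReal_pos (Metric.measure_ball_pos volume _ one_pos).ne'
    measure_ball_lt_top.ne
  set d := |g.det|
  have hd : 0 < d := abs_pos.mpr hg.ne_zero
  set t := d ^ ((m + 1 : ℕ) : ℝ)⁻¹
  have ht : 0 < t := Real.rpow_pos_of_pos hd _
  have ht_pow : t ^ (m + 1) = d := Real.rpow_inv_natCast_pow hd.le (by omega)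
  have hd_rpow : d ^ (-(1 : ℝ) / (m + 1 : ℕ)) = t⁻¹ := by
    rw [neg_div, Real.rpow_neg hd.le, one_div]
  have hdA_rpow : |g⁻¹ᵀ.det| ^ (-(1 : ℝ) / (m + 1 : ℕ)) = t := by
    rw [det_transpose, det_nonsing_inv, Ring.inverse_eq_inv', abs_inv, Real.inv_rpow hd.le,
      hd_rpow, inv_inv]
  rw [unimodularNorm, hd_rpow] at h
  set p := WithLp.toLp 2 (vecMul (fun j => (v j : ℝ)) g)
  have hvol : 2 ^ m * ‖p‖ * d⁻¹ < (s / t) ^ m * V := by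
    rw [div_pow, ← ht_pow]
    calc 2 ^ m * ‖p‖ * (t ^ (m + 1))⁻¹ = 2 ^ m / V * (t⁻¹ * ‖p‖) * V / t ^ m := by
          field_simp
          ring
      _ < s ^ m * V / t ^ m := by gcongr
      _ = s ^ m / t ^ m * V := by ring
  obtain ⟨w, hw, hwr⟩ := exists_ne_zero_norm_vecMul_inv_transpose_lt (by simp) g hg hv
    (div_pos hs ht) hvol
  refine ⟨w, hw, ?_⟩
  calc g⁻¹ᵀ.unimodularNorm w = t * ‖WithLp.toLp 2 (vecMul (fun j => (w j : ℝ)) g⁻¹ᵀ)‖ := by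
        rw [unimodularNorm, hdA_rpow]
    _ < t * (s / t) := by gcongr
    _ = s := by field_simp

end Matrix

theorem pow_le_of_forall_lt_of_lt_pow {a R : ℝ} {m : ℕ} (hm : m ≠ 0) (ha : 0 ≤ a) (hR : 0 ≤ R)
    (h : ∀ s, 0 < s → R < s ^ m → a < s) : a ^ m ≤ R := by
  by_contra! hlt
  have ha' : 0 < a := ha.lt_of_ne (by rintro rfl; rw [zero_pow hm] at hlt; linarith)
  exact (h a ha' hlt).false

/-- For `g ∈ GL_n(ℝ)`, let `λ₁(g)` be the length of the shortest nonzero vector of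
the unimodular lattice `|det g|^{-1/n} ℤⁿ g` (with the Euclidean norm). Then
`λ₁(ᵗg⁻¹)^{n-1} ≤ (2^{n-1}/V_{n-1}) λ₁(g)`. -/
theorem stmt7 (n : ℕ) (hn : 2 ≤ n) (g : Matrix (Fin n) (Fin n) ℝ) (hg : IsUnit g.det)
    (lam : Matrix (Fin n) (Fin n) ℝ → ℝ)
    (hlam : ∀ M : Matrix (Fin n) (Fin n) ℝ, IsUnit M.det →
      IsLeast {r : ℝ | ∃ v : Fin n → ℤ, v ≠ 0 ∧
        r = |M.det| ^ (-(1 : ℝ) / n) *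
          Real.sqrt (∑ i, (Matrix.vecMul (fun j => (v j : ℝ)) M i) ^ 2)} (lam M)) :
    lam ((g⁻¹).transpose) ^ (n - 1)
      ≤ 2 ^ (n - 1) /
          (volume (Metric.ball (0 : EuclideanSpace ℝ (Fin (n - 1))) 1)).toReal *
        lam g := by
  obtain ⟨m, rfl⟩ : ∃ m, n = m + 1 := ⟨n - 1, by omega⟩
  rw [Nat.add_sub_cancel]
  simp_rw [← EuclideanSpace.norm_toLp_eq_sqrt_sum_sq] at hlam
  have hA : IsUnit g⁻¹ᵀ.det := by
    rw [det_transpose]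
    exact g.isUnit_nonsing_inv_det hg
  obtain ⟨v, hv, hlam_g⟩ := (hlam g hg).1
  obtain ⟨u, -, hlam_A⟩ := (hlam _ hA).1
  refine pow_le_of_forall_lt_of_lt_pow (by omega) (hlam_A ▸ unimodularNorm_nonneg _ _)
    (by rw [hlam_g]; exact mul_nonneg (by positivity) (unimodularNorm_nonneg _ _))
    fun s hs hRs => ?_
  obtain ⟨w, hw, hws⟩ :=
    exists_unimodularNorm_inv_transpose_lt g hg hv hs (by rwa [hlam_g] at hRs)
  exact ((hlam _ hA).2 ⟨w, hw, rfl⟩).trans_lt hws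
end

section
/- Assume the approximate functional equation E*(g,s) + 1/s + 1/(n-s) ≥ (1/2) ∑_{0≠b∈ℤ} f(s, |b| λ₁(g)) for real 1 < s < n, where f(s,a) = ∫_1^∞ t^{s/2} e^{-π t a²} dt/t. Then whenever λ₁(g) ≤ 2^{-1/(s-1)}, one has E*(g,s) + 1/s + 1/(n-s) ≥ c · λ₁(g)^{-s} for an explicit constant c = erfc(√π)/(2(s-1)) > 0 depending only on s. -/
/-!
Write `f(s, a) = ∫_1^∞ t^(s/2-1) e^(-π t a²) dt`. By evenness in `b`, the hypothesis bounds
`∑_{k ≥ 1} f(s, kλ)`, which by Tonelli is `∫_1^∞ t^(s/2-1) ∑_{k ≥ 1} e^(-(kc)²) dt` with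
`c = λ √(π t)`. Comparing the antitone Gaussian sum with its integral gives
`∑_{k ≥ 1} e^(-(kc)²) ≥ c⁻¹ ∫_c^∞ e^(-u²) du`, and for `1 ≤ t ≤ λ⁻²` we have `c ≤ √π`, so the
inner sum is at least `(√π / 2) erfc(√π) / c`. Integrating `t^((s-3)/2)` over `[1, λ⁻²]` yields
`∑_{k ≥ 1} f(s, kλ) ≥ erfc(√π) (λ^(-s) - λ⁻¹) / (s - 1)`, and `λ^(s-1) ≤ 1/2` absorbs `λ⁻¹`
into `λ^(-s) / 2`.
-/

open Real Set MeasureTheory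

/-- Tonelli in `ℝ≥0∞`: this avoids proving that `∑' n, φ n` is integrable. -/
theorem integral_le_tsum_integral_of_le_tsum {α : Type*} [MeasurableSpace α] {μ : Measure α}
    {φ : ℕ → α → ℝ} {ψ : α → ℝ} (hφ : ∀ n, Integrable (φ n) μ) (hφ0 : ∀ n, 0 ≤ᵐ[μ] φ n)
    (hsum : Summable fun n ↦ ∫ x, φ n x ∂μ) (hψ : Integrable ψ μ) (hψ0 : 0 ≤ᵐ[μ] ψ)
    (hle : ∀ᵐ x ∂μ, ψ x ≤ ∑' n, φ n x) :
    ∫ x, ψ x ∂μ ≤ ∑' n, ∫ x, φ n x ∂μ := by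
  have hpt : ∀ᵐ x ∂μ, ENNReal.ofReal (ψ x) ≤ ∑' n, ENNReal.ofReal (φ n x) := by
    filter_upwards [hle, ae_all_iff.2 hφ0] with x hx hx0
    by_cases hs : Summable (φ · x)
    · rw [← ENNReal.ofReal_tsum_of_nonneg hx0 hs]
      exact ENNReal.ofReal_le_ofReal hx
    · rw [tsum_eq_zero_of_not_summable hs] at hx
      simp [ENNReal.ofReal_eq_zero.2 hx]
  have hint0 (n : ℕ) : 0 ≤ ∫ x, φ n x ∂μ := integral_nonneg_of_ae (hφ0 n)
  rw [← ENNReal.ofReal_le_ofReal_iff (tsum_nonneg hint0),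
    ofReal_integral_eq_lintegral_ofReal hψ hψ0, ENNReal.ofReal_tsum_of_nonneg hint0 hsum]
  calc ∫⁻ x, ENNReal.ofReal (ψ x) ∂μ ≤ ∫⁻ x, ∑' n, ENNReal.ofReal (φ n x) ∂μ :=
        lintegral_mono_ae hpt
    _ = ∑' n, ∫⁻ x, ENNReal.ofReal (φ n x) ∂μ :=
        lintegral_tsum fun n ↦ (hφ n).aemeasurable.ennreal_ofReal
    _ = ∑' n, ENNReal.ofReal (∫ x, φ n x ∂μ) := by
        simp_rw [ofReal_integral_eq_lintegral_ofReal (hφ _) (hφ0 _)]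

theorem summable_exp_neg_mul_natCast_sq {c : ℝ} (hc : c ≠ 0) :
    Summable fun n : ℕ ↦ exp (-(c * n) ^ 2) := by
  have := summable_exp_nat_mul_of_ge (c := -c ^ 2) (neg_neg_of_pos (by positivity))
    (f := fun n : ℕ ↦ (n : ℝ) ^ 2) fun i ↦ by exact_mod_cast Nat.le_self_pow two_ne_zero i
  simpa [mul_pow] using this

theorem integral_Ioi_exp_neg_sq_le_mul_tsum {c : ℝ} (hc : 0 < c) :
    ∫ u in Ioi c, exp (-u ^ 2) ≤ c * ∑' n : ℕ, exp (-(c * (n + 1)) ^ 2) := by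
  have hanti : AntitoneOn (fun x ↦ exp (-(c * x) ^ 2)) (Ici ((1 : ℕ) : ℝ)) := by
    intro x hx y hy hxy
    simp only [Nat.cast_one, mem_Ici] at hx
    exact exp_le_exp.2 (neg_le_neg (pow_le_pow_left₀ (by positivity) (by gcongr) 2))
  have := hanti.integral_le_tsum_comp_add 1 (summable_exp_neg_mul_natCast_sq hc.ne')
    fun _ _ ↦ (exp_pos _).le
  rw [Nat.cast_one, integral_comp_mul_left_Ioi (fun u ↦ exp (-u ^ 2)) 1 hc, mul_one,
    smul_eq_mul] at this
  push_cast at this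
  rwa [inv_mul_le_iff₀ hc] at this

/-- The function `f(s, a)` of the approximate functional equation. -/
noncomputable def afeKernel (s a : ℝ) : ℝ :=
  ∫ t in Ioi (1 : ℝ), t ^ (s / 2) * exp (-(π * t * a ^ 2)) / t

theorem afeKernel_eq (s a : ℝ) :
    afeKernel s a = ∫ t in Ioi (1 : ℝ), t ^ (s / 2 - 1) * exp (-(π * t * a ^ 2)) :=
  setIntegral_congr_fun measurableSet_Ioi fun t ht ↦ by
    rw [rpow_sub_one (zero_lt_one.trans ht).ne']
    ring

theorem integrableOn_afeKernel_integrand {s a : ℝ} (hs : 0 < s) (ha : a ≠ 0) :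
    IntegrableOn (fun t ↦ t ^ (s / 2 - 1) * exp (-(π * t * a ^ 2))) (Ioi 1) := by
  refine ((integrableOn_rpow_mul_exp_neg_mul_rpow (s := s / 2 - 1) (by linarith) one_pos
    (by positivity : 0 < π * a ^ 2)).mono_set (Ioi_subset_Ioi zero_le_one)).congr_fun
    (fun t _ ↦ ?_) measurableSet_Ioi
  simp only [rpow_one]
  ring_nf

theorem afeKernel_nonneg (s a : ℝ) : 0 ≤ afeKernel s a :=
  setIntegral_nonneg measurableSet_Ioi fun t ht ↦ by
    have : 0 < t := zero_lt_one.trans ht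
    positivity

theorem afeKernel_succ_mul_le {s a : ℝ} (hs : 0 < s) (ha : a ≠ 0) (n : ℕ) :
    afeKernel s ((n + 1) * a) ≤ exp (n * -(π * a ^ 2)) * afeKernel s a := by
  rw [afeKernel_eq, afeKernel_eq, ← integral_const_mul]
  refine setIntegral_mono_on (integrableOn_afeKernel_integrand hs (by positivity))
    ((integrableOn_afeKernel_integrand hs ha).const_mul _) measurableSet_Ioi fun t ht ↦ ?_
  have ht1 : 1 ≤ t := le_of_lt ht
  rw [mul_left_comm, ← exp_add]
  gcongr
  have key : 0 ≤ π * a ^ 2 * ((t - 1) * (n ^ 2 + 2 * n) + (n ^ 2 + n)) :=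
    mul_nonneg (by positivity)
      (add_nonneg (mul_nonneg (by linarith) (by positivity)) (by positivity))
  linarith

theorem summable_afeKernel_succ_mul {s a : ℝ} (hs : 0 < s) (ha : a ≠ 0) :
    Summable fun n : ℕ ↦ afeKernel s ((n + 1) * a) :=
  ((summable_exp_nat_mul_iff.2 (neg_neg_of_pos (by positivity))).mul_right _).of_nonneg_of_le
    (fun _ ↦ afeKernel_nonneg _ _) (afeKernel_succ_mul_le hs ha)

theorem hasSum_afeKernel_abs_mul {s a : ℝ} (hs : 0 < s) (ha : a ≠ 0) :
    HasSum (fun b : {b : ℤ // b ≠ 0} ↦ afeKernel s (|(b : ℤ)| * a))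
      (2 * ∑' n : ℕ, afeKernel s ((n + 1) * a)) := by
  set S := ∑' n : ℕ, afeKernel s ((n + 1) * a)
  have h : HasSum (fun n : ℕ ↦ afeKernel s ((n + 1) * a)) S :=
    (summable_afeKernel_succ_mul hs ha).hasSum
  have := HasSum.of_add_one_of_neg_add_one (m := S) (m' := S)
    (f := {b : ℤ | b ≠ 0}.indicator fun b ↦ afeKernel s (|b| * a)) ?_ ?_
  · rw [indicator_of_notMem (by simp), add_zero, ← two_mul] at this
    exact hasSum_subtype_iff_indicator.2 this
  all_goals
    refine h.congr_fun fun n ↦ ?_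
    rw [indicator_of_mem (by simp only [mem_ofPred_eq]; omega)]
    push_cast
    simp only [abs_neg, abs_of_nonneg (by positivity : (0 : ℝ) ≤ n + 1)]

theorem le_tsum_afeKernel_integrand {s a t : ℝ} (ha : 0 < a) (ht0 : 0 < t) (ht : t ≤ a⁻¹ ^ 2) :
    (∫ u in Ioi √π, exp (-u ^ 2)) / (a * √π) * t ^ ((s - 3) / 2)
      ≤ ∑' n : ℕ, t ^ (s / 2 - 1) * exp (-(π * t * ((n + 1) * a) ^ 2)) := by
  set c := a * (√π * √t) with hc_def
  have hc : 0 < c := by positivity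
  have hcπ : c ≤ √π := by
    have : √t ≤ a⁻¹ := (sqrt_le_sqrt ht).trans_eq (sqrt_sq (by positivity))
    calc c ≤ a * (√π * a⁻¹) := by rw [hc_def]; gcongr
      _ = √π := by field_simp
  have hsq (n : ℕ) : π * t * ((n + 1) * a) ^ 2 = (c * (n + 1)) ^ 2 := by
    have : (√π * √t) ^ 2 = π * t := by rw [mul_pow, sq_sqrt pi_pos.le, sq_sqrt ht0.le]
    rw [hc_def]
    linear_combination (-(a ^ 2 * (n + 1) ^ 2)) * this
  have hJ : ∫ u in Ioi √π, exp (-u ^ 2) ≤ c * ∑' n : ℕ, exp (-(c * (n + 1)) ^ 2) :=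
    (setIntegral_mono_set (by simpa using (integrable_exp_neg_mul_sq one_pos).integrableOn)
      (.of_forall fun _ ↦ (exp_pos _).le) (Ioi_subset_Ioi hcπ).eventuallyLE).trans
      (integral_Ioi_exp_neg_sq_le_mul_tsum hc)
  have hrpow : t ^ ((s - 3) / 2) = t ^ (s / 2 - 1) / √t := by
    rw [sqrt_eq_rpow, ← rpow_sub ht0]
    ring_nf
  calc (∫ u in Ioi √π, exp (-u ^ 2)) / (a * √π) * t ^ ((s - 3) / 2)
      = t ^ (s / 2 - 1) * ((∫ u in Ioi √π, exp (-u ^ 2)) / c) := by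
        rw [hrpow, hc_def]
        field_simp
    _ ≤ t ^ (s / 2 - 1) * ∑' n : ℕ, exp (-(c * (n + 1)) ^ 2) := by
        gcongr
        rwa [div_le_iff₀' hc]
    _ = ∑' n : ℕ, t ^ (s / 2 - 1) * exp (-(π * t * ((n + 1) * a) ^ 2)) := by
        simp_rw [hsq, tsum_mul_left]

theorem integral_rpow_one_inv_sq {s a : ℝ} (hs : 1 < s) (ha : 0 < a) :
    ∫ t in (1 : ℝ)..a⁻¹ ^ 2, t ^ ((s - 3) / 2) = 2 * a * (a ^ (-s) - a⁻¹) / (s - 1) := by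
  have hpow : (a⁻¹ ^ 2) ^ ((s - 1) / 2) = a ^ (-s) * a := by
    rw [← rpow_natCast, ← rpow_mul (inv_nonneg.2 ha.le), inv_rpow ha.le, ← rpow_neg ha.le,
      ← rpow_add_one ha.ne']
    congr 1
    push_cast
    ring
  rw [integral_rpow (Or.inl (by linarith)), show (s - 3) / 2 + 1 = (s - 1) / 2 by ring, hpow,
    one_rpow]
  field_simp

theorem le_tsum_afeKernel_succ_mul {s a : ℝ} (hs : 1 < s) (ha0 : 0 < a) (ha1 : a ≤ 1) :
    2 / √π * (∫ u in Ioi √π, exp (-u ^ 2)) * (a ^ (-s) - a⁻¹) / (s - 1)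
      ≤ ∑' n : ℕ, afeKernel s ((n + 1) * a) := by
  set J := ∫ u in Ioi √π, exp (-u ^ 2)
  set B := a⁻¹ ^ 2
  have hB : 1 ≤ B := one_le_pow₀ ((one_le_inv₀ ha0).2 ha1)
  set ψ := (Ioc 1 B).indicator fun t ↦ J / (a * √π) * t ^ ((s - 3) / 2) with hψ_def
  have hψ : IntegrableOn ψ (Ioi 1) := by
    refine (IntegrableOn.integrable_indicator ?_ measurableSet_Ioc).integrableOn
    refine (ContinuousOn.integrableOn_Icc ?_).mono_set Ioc_subset_Icc_self
    exact continuousOn_const.mul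
      (continuousOn_id.rpow_const fun t ht ↦ Or.inl (zero_lt_one.trans_le ht.1).ne')
  calc 2 / √π * J * (a ^ (-s) - a⁻¹) / (s - 1) = ∫ t in Ioi 1, ψ t := by
        rw [setIntegral_indicator measurableSet_Ioc, inter_eq_right.2 Ioc_subset_Ioi_self,
          ← intervalIntegral.integral_of_le hB, intervalIntegral.integral_const_mul,
          integral_rpow_one_inv_sq hs ha0]
        field_simp
    _ ≤ ∑' n : ℕ, ∫ t in Ioi 1, t ^ (s / 2 - 1) * exp (-(π * t * ((n + 1) * a) ^ 2)) := by
        refine integral_le_tsum_integral_of_le_tsum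
          (fun n ↦ integrableOn_afeKernel_integrand (by linarith) (by positivity))
          (fun n ↦ (ae_restrict_iff' measurableSet_Ioi).2 (.of_forall fun t ht ↦ ?_))
          (by simpa only [afeKernel_eq] using summable_afeKernel_succ_mul (by linarith) ha0.ne')
          hψ ((ae_restrict_iff' measurableSet_Ioi).2 (.of_forall fun t ht ↦ ?_))
          ((ae_restrict_iff' measurableSet_Ioi).2 (.of_forall fun t ht ↦ ?_))
        · have : 0 < t := zero_lt_one.trans ht
          positivity
        · refine indicator_nonneg (fun t ht ↦ ?_) t
          have : 0 < t := zero_lt_one.trans ht.1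
          positivity
        · by_cases htB : t ∈ Ioc 1 B
          · rw [hψ_def, indicator_of_mem htB]
            exact le_tsum_afeKernel_integrand ha0 (zero_lt_one.trans ht) htB.2
          · rw [hψ_def, indicator_of_notMem htB]
            have : 0 < t := zero_lt_one.trans ht
            exact tsum_nonneg fun n ↦ by positivity
    _ = ∑' n : ℕ, afeKernel s ((n + 1) * a) := by simp_rw [afeKernel_eq]

theorem two_mul_inv_le_rpow_neg {s x : ℝ} (hs : 1 < s) (hx : 0 < x)
    (h : x ≤ 2 ^ (-1 / (s - 1))) : 2 * x⁻¹ ≤ x ^ (-s) := by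
  have hhalf : x ^ (s - 1) ≤ 2⁻¹ :=
    calc x ^ (s - 1) ≤ (2 ^ (-1 / (s - 1))) ^ (s - 1) := rpow_le_rpow hx.le h (by linarith)
      _ = 2⁻¹ := by
        rw [← rpow_mul zero_le_two, div_mul_cancel₀ _ (by linarith), rpow_neg_one]
  have hinv : x ^ (-s) * x ^ (s - 1) = x⁻¹ := by
    rw [← rpow_add hx, show -s + (s - 1) = -1 by ring, rpow_neg_one]
  rw [← hinv]
  nlinarith [rpow_pos_of_pos hx (-s)]

theorem stmt10_general (n : ℕ) (s : ℝ) (hs1 : 1 < s)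
    (Estar lam : ℝ) (hlam0 : 0 < lam)
    (erfc : ℝ → ℝ)
    (herfc : ∀ x : ℝ, erfc x = (2 / Real.sqrt π) * ∫ u in Ioi x, Real.exp (-u ^ 2))
    (hAFE : (1 / 2) * ∑' b : {b : ℤ // b ≠ 0},
        (∫ t in Ioi (1 : ℝ),
          t ^ (s / 2) * Real.exp (-(π * t * (|(b : ℤ)| * lam : ℝ) ^ 2)) / t)
      ≤ Estar + 1 / s + 1 / (n - s))
    (hsmall : lam ≤ 2 ^ (-1 / (s - 1) : ℝ)) :
    erfc (Real.sqrt π) / (2 * (s - 1)) * lam ^ (-s)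
      ≤ Estar + 1 / s + 1 / (n - s) := by
  have hlam1 : lam ≤ 1 :=
    hsmall.trans (rpow_le_one_of_one_le_of_nonpos one_le_two
      (div_nonpos_of_nonpos_of_nonneg (by norm_num) (by linarith)))
  have herfc0 : 0 ≤ erfc √π := by
    rw [herfc]
    positivity
  calc erfc √π / (2 * (s - 1)) * lam ^ (-s) = erfc √π * (lam ^ (-s) / 2) / (s - 1) := by
        rw [mul_comm 2 (s - 1), ← div_div]
        ring
    _ ≤ erfc √π * (lam ^ (-s) - lam⁻¹) / (s - 1) := by
        have := two_mul_inv_le_rpow_neg hs1 hlam0 hsmall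
        gcongr
        linarith
    _ ≤ ∑' k : ℕ, afeKernel s ((k + 1) * lam) := by
        rw [herfc]
        exact le_tsum_afeKernel_succ_mul hs1 hlam0 hlam1
    _ = 1 / 2 * ∑' b : {b : ℤ // b ≠ 0}, afeKernel s (|(b : ℤ)| * lam) := by
        rw [(hasSum_afeKernel_abs_mul (by linarith) hlam0.ne').tsum_eq]
        ring
    _ ≤ Estar + 1 / s + 1 / (n - s) := hAFE

/-- Assume `E*(g,s) + 1/s + 1/(n-s) ≥ (1/2) ∑_{0≠b∈ℤ} f(s, |b| λ₁(g))` for real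
`1 < s < n`, where `f(s,a) = ∫_1^∞ t^{s/2} e^{-π t a²} dt/t`. Then whenever
`λ₁(g) ≤ 2^{-1/(s-1)}`, one has
`E*(g,s) + 1/s + 1/(n-s) ≥ (erfc(√π)/(2(s-1))) λ₁(g)^{-s}`,
where `erfc(x) = (2/√π)∫_x^∞ e^{-u²} du`. Here `Estar` denotes the value
`E*(g,s)` and `lam` denotes `λ₁(g) > 0`. -/
theorem stmt10 (n : ℕ) (s : ℝ) (hs1 : 1 < s) (hsn : s < n)
    (Estar lam : ℝ) (hlam0 : 0 < lam)
    (erfc : ℝ → ℝ)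
    (herfc : ∀ x : ℝ, erfc x = (2 / Real.sqrt π) * ∫ u in Ioi x, Real.exp (-u ^ 2))
    (hAFE : (1 / 2) * ∑' b : {b : ℤ // b ≠ 0},
        (∫ t in Ioi (1 : ℝ),
          t ^ (s / 2) * Real.exp (-(π * t * (|(b : ℤ)| * lam : ℝ) ^ 2)) / t)
      ≤ Estar + 1 / s + 1 / (n - s))
    (hsmall : lam ≤ 2 ^ (-1 / (s - 1) : ℝ)) :
    erfc (Real.sqrt π) / (2 * (s - 1)) * lam ^ (-s)
      ≤ Estar + 1 / s + 1 / (n - s) :=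
  stmt10_general n s hs1 Estar lam hlam0 erfc herfc hAFE hsmall
end
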